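/- In the extremal Type III weight enumerator W*(X,Y) of length n = 72 = 24·3, the coefficient A*_{72} of Y^72 (the highest power of Y) is negative. -/
import Mathlib

open MvPolynomial

/-- Gleason generator `f = X^4 + 8XY^3` for Type III weight enumerators. -/
noncomputable def fIII : MvPolynomial (Fin 2) ℝ := X 0 ^ 4 + 8 * X 0 * X 1 ^ 3

/-- Gleason generator `g = Y^3 (X^3 - Y^3)^3` for Type III weight enumerators. -/
noncomputable def gIII : MvPolynomial (Fin 2) ℝ := X 1 ^ 3 * (X 0 ^ 3 - X 1 ^ 3) ^ 3

/-- The coefficient of the monomial `X^a Y^b` in a two-variable polynomial. -/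
noncomputable def coeffXY (P : MvPolynomial (Fin 2) ℝ) (a b : ℕ) : ℝ :=
  P.coeff (Finsupp.single 0 a + Finsupp.single 1 b)

/-- `P` is the extremal Type III weight enumerator of length `n`: a polynomial
`∑_{i=0}^{m} a_i f^(n/4-3i) g^i` (with `m = ⌊n/12⌋`) of the form
`X^n + ∑_{i=m+1}^{n/3} A*_{3i} X^(n-3i) Y^(3i)`. -/
def IsExtremalWE3 (n : ℕ) (P : MvPolynomial (Fin 2) ℝ) : Prop :=
  (∃ a : Fin (n / 12 + 1) → ℝ,
    P = ∑ i : Fin (n / 12 + 1), C (a i) * fIII ^ (n / 4 - 3 * (i : ℕ)) * gIII ^ (i : ℕ)) ∧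
  coeffXY P n 0 = 1 ∧
  ∀ i : ℕ, 1 ≤ i → i ≤ n / 12 → coeffXY P (n - 3 * i) (3 * i) = 0

lemma coeffXY_add (p q : MvPolynomial (Fin 2) ℝ) (a b : ℕ) :
    coeffXY (p + q) a b = coeffXY p a b + coeffXY q a b := coeff_add _ _ _

lemma coeffXY_sub (p q : MvPolynomial (Fin 2) ℝ) (a b : ℕ) :
    coeffXY (p - q) a b = coeffXY p a b - coeffXY q a b := by
  simp [coeffXY, MvPolynomial.coeff_sub]

lemma coeffXY_Cmul (r : ℝ) (p : MvPolynomial (Fin 2) ℝ) (a b : ℕ) :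
    coeffXY (C r * p) a b = r * coeffXY p a b := by
  simp [coeffXY, MvPolynomial.coeff_C_mul]

lemma single_pair_eq (a b a' b' : ℕ) :
    (Finsupp.single (0 : Fin 2) a + Finsupp.single 1 b
      = Finsupp.single (0 : Fin 2) a' + Finsupp.single 1 b') ↔ (a = a' ∧ b = b') := by
  constructor
  · intro h
    have h0 := DFunLike.congr_fun h 0
    have h1 := DFunLike.congr_fun h 1
    simp [Finsupp.single_apply] at h0 h1
    exact ⟨h0, h1⟩
  · rintro ⟨rfl, rfl⟩; rfl

lemma coeffXY_XX (a b a' b' : ℕ) :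
    coeffXY (X 0 ^ a * X 1 ^ b) a' b' = if a = a' ∧ b = b' then 1 else 0 := by
  rw [coeffXY, X_pow_eq_monomial, X_pow_eq_monomial, monomial_mul, coeff_monomial]
  simp only [single_pair_eq, one_mul]

lemma expIII0 : fIII ^ 18 * gIII ^ 0 =
    C (1 : ℝ) * (X 0 ^ 72 * X 1 ^ 0) + C (144 : ℝ) * (X 0 ^ 69 * X 1 ^ 3) + C (9792 : ℝ) * (X 0 ^ 66 * X 1 ^ 6) + C (417792 : ℝ) * (X 0 ^ 63 * X 1 ^ 9) + C (12533760 : ℝ) * (X 0 ^ 60 * X 1 ^ 12) + C (280756224 : ℝ) * (X 0 ^ 57 * X 1 ^ 15) + C (4866441216 : ℝ) * (X 0 ^ 54 * X 1 ^ 18) + C (66739765248 : ℝ) * (X 0 ^ 51 * X 1 ^ 21) + C (734137417728 : ℝ) * (X 0 ^ 48 * X 1 ^ 24) + C (6525665935360 : ℝ) * (X 0 ^ 45 * X 1 ^ 27) + C (46984794734592 : ℝ) * (X 0 ^ 42 * X 1 ^ 30) + C (273366078455808 : ℝ) * (X 0 ^ 39 * X 1 ^ 33) + C (1275708366127104 :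 ℝ) * (X 0 ^ 36 * X 1 ^ 36) + C (4710307813392384 : ℝ) * (X 0 ^ 33 * X 1 ^ 39) + C (13458022323978240 : ℝ) * (X 0 ^ 30 * X 1 ^ 42) + C (28710447624486912 : ℝ) * (X 0 ^ 27 * X 1 ^ 45) + C (43065671436730368 : ℝ) * (X 0 ^ 24 * X 1 ^ 48) + C (40532396646334464 : ℝ) * (X 0 ^ 21 * X 1 ^ 51) + C (18014398509481984 : ℝ) * (X 0 ^ 18 * X 1 ^ 54) := by
  unfold fIII gIII
  simp only [map_ofNat, map_one]
  ring

lemma expIII1 : fIII ^ 15 * gIII ^ 1 =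
    C (1 : ℝ) * (X 0 ^ 69 * X 1 ^ 3) + C (117 : ℝ) * (X 0 ^ 66 * X 1 ^ 6) + C (6363 : ℝ) * (X 0 ^ 63 * X 1 ^ 9) + C (213159 : ℝ) * (X 0 ^ 60 * X 1 ^ 12) + C (4912200 : ℝ) * (X 0 ^ 57 * X 1 ^ 15) + C (82321344 : ℝ) * (X 0 ^ 54 * X 1 ^ 18) + C (1033363968 : ℝ) * (X 0 ^ 51 * X 1 ^ 21) + C (9848696832 : ℝ) * (X 0 ^ 48 * X 1 ^ 24) + C (71313555456 : ℝ) * (X 0 ^ 45 * X 1 ^ 27) + C (387049062400 : ℝ) * (X 0 ^ 42 * X 1 ^ 30) + C (1519556493312 : ℝ) * (X 0 ^ 39 * X 1 ^ 33) + C (3959238426624 : ℝ) * (X 0 ^ 36 * X 1 ^ 36) + C (5093160124416 : ℝ) * (X 0 ^ 33 * X 1 ^ 39) - C (4126389829632 : ℝ) * (X 0 ^ 30 * X 1 ^ 42) - C (25125558681600 : ℝ) * (X 0 ^ 27 * X 1 ^ 45) - C (20822001451008 : ℝ) * (X 0 ^ 24 * X 1 ^ 48) + C (34634616274944 : ℝ)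 * (X 0 ^ 21 * X 1 ^ 51) + C (39582418599936 : ℝ) * (X 0 ^ 18 * X 1 ^ 54) - C (35184372088832 : ℝ) * (X 0 ^ 15 * X 1 ^ 57) := by
  unfold fIII gIII
  simp only [map_ofNat, map_one]
  ring

lemma expIII2 : fIII ^ 12 * gIII ^ 2 =
    C (1 : ℝ) * (X 0 ^ 66 * X 1 ^ 6) + C (90 : ℝ) * (X 0 ^ 63 * X 1 ^ 9) + C (3663 : ℝ) * (X 0 ^ 60 * X 1 ^ 12) + C (88716 : ℝ) * (X 0 ^ 57 * X 1 ^ 15) + C (1413135 : ℝ) * (X 0 ^ 54 * X 1 ^ 18) + C (15393690 : ℝ) * (X 0 ^ 51 * X 1 ^ 21) + C (114730305 : ℝ) * (X 0 ^ 48 * X 1 ^ 24) + C (558015840 : ℝ) * (X 0 ^ 45 * X 1 ^ 27) + C (1483067520 : ℝ) * (X 0 ^ 42 * X 1 ^ 30) + C (146544640 : ℝ) * (X 0 ^ 39 * X 1 ^ 33) - C (11468869632 : ℝ) * (X 0 ^ 36 * X 1 ^ 36) - C (21811691520 : ℝ) * (X 0 ^ 33 * X 1 ^ 39) + C (37537972224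 : ℝ) * (X 0 ^ 30 * X 1 ^ 42) + C (111283273728 : ℝ) * (X 0 ^ 27 * X 1 ^ 45) - C (136650424320 : ℝ) * (X 0 ^ 24 * X 1 ^ 48) - C (223875170304 : ℝ) * (X 0 ^ 21 * X 1 ^ 51) + C (483183820800 : ℝ) * (X 0 ^ 18 * X 1 ^ 54) - C (309237645312 : ℝ) * (X 0 ^ 15 * X 1 ^ 57) + C (68719476736 : ℝ) * (X 0 ^ 12 * X 1 ^ 60) := by
  unfold fIII gIII
  simp only [map_ofNat, map_one]
  ring

lemma expIII3 : fIII ^ 9 * gIII ^ 3 =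
    C (1 : ℝ) * (X 0 ^ 63 * X 1 ^ 9) + C (63 : ℝ) * (X 0 ^ 60 * X 1 ^ 12) + C (1692 : ℝ) * (X 0 ^ 57 * X 1 ^ 15) + C (24780 : ℝ) * (X 0 ^ 54 * X 1 ^ 18) + C (206046 : ℝ) * (X 0 ^ 51 * X 1 ^ 21) + C (847602 : ℝ) * (X 0 ^ 48 * X 1 ^ 24) + C (109284 : ℝ) * (X 0 ^ 45 * X 1 ^ 27) - C (12265092 : ℝ) * (X 0 ^ 42 * X 1 ^ 30) - C (22775319 : ℝ) * (X 0 ^ 39 * X 1 ^ 33) + C (102211207 : ℝ) * (X 0 ^ 36 * X 1 ^ 36) + C (182202552 : ℝ) * (X 0 ^ 33 * X 1 ^ 39) - C (784965888 : ℝ) * (X 0 ^ 30 * X 1 ^ 42) - C (55953408 : ℝ) * (X 0 ^ 27 * X 1 ^ 45) + C (3471777792 : ℝ) * (X 0 ^ 24 * X 1 ^ 48) - C (6751715328 : ℝ) * (X 0 ^ 21 * X 1 ^ 51) + C (6495928320 : ℝ) * (X 0 ^ 18 * X 1 ^ 54) - C (3548381184 : ℝ) * (X 0 ^ 15 * X 1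 ^ 57) + C (1056964608 : ℝ) * (X 0 ^ 12 * X 1 ^ 60) - C (134217728 : ℝ) * (X 0 ^ 9 * X 1 ^ 63) := by
  unfold fIII gIII
  simp only [map_ofNat, map_one]
  ring

lemma expIII4 : fIII ^ 6 * gIII ^ 4 =
    C (1 : ℝ) * (X 0 ^ 60 * X 1 ^ 12) + C (36 : ℝ) * (X 0 ^ 57 * X 1 ^ 15) + C (450 : ℝ) * (X 0 ^ 54 * X 1 ^ 18) + C (1668 : ℝ) * (X 0 ^ 51 * X 1 ^ 21) - C (8145 : ℝ) * (X 0 ^ 48 * X 1 ^ 24) - C (53064 : ℝ) * (X 0 ^ 45 * X 1 ^ 27) + C (143196 : ℝ) * (X 0 ^ 42 * X 1 ^ 30) + C (665640 : ℝ) * (X 0 ^ 39 * X 1 ^ 33) - C (2800017 : ℝ) * (X 0 ^ 36 * X 1 ^ 36) - C (286220 : ℝ) * (X 0 ^ 33 * X 1 ^ 39) + C (23172930 : ℝ) * (X 0 ^ 30 * X 1 ^ 42) - C (69751980 : ℝ) * (X 0 ^ 27 * X 1 ^ 45) + C (114730305 : ℝ) * (X 0 ^ 24 * X 1 ^ 48)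 - C (123149520 : ℝ) * (X 0 ^ 21 * X 1 ^ 51) + C (90440640 : ℝ) * (X 0 ^ 18 * X 1 ^ 54) - C (45422592 : ℝ) * (X 0 ^ 15 * X 1 ^ 57) + C (15003648 : ℝ) * (X 0 ^ 12 * X 1 ^ 60) - C (2949120 : ℝ) * (X 0 ^ 9 * X 1 ^ 63) + C (262144 : ℝ) * (X 0 ^ 6 * X 1 ^ 66) := by
  unfold fIII gIII
  simp only [map_ofNat, map_one]
  ring

lemma expIII5 : fIII ^ 3 * gIII ^ 5 =
    C (1 : ℝ) * (X 0 ^ 57 * X 1 ^ 15) + C (9 : ℝ) * (X 0 ^ 54 * X 1 ^ 18) - C (63 : ℝ) * (X 0 ^ 51 * X 1 ^ 21) - C (303 : ℝ) * (X 0 ^ 48 * X 1 ^ 24) + C (2925 : ℝ) * (X 0 ^ 45 * X 1 ^ 27) - C (3843 : ℝ) * (X 0 ^ 42 * X 1 ^ 30) - C (37947 : ℝ) * (X 0 ^ 39 * X 1 ^ 33) + C (235989 : ℝ) * (X 0 ^ 36 * X 1 ^ 36) - C (724581 : ℝ) * (X 0 ^ 33 * X 1 ^ 39) + C (1476475 :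 ℝ) * (X 0 ^ 30 * X 1 ^ 42) - C (2176317 : ℝ) * (X 0 ^ 27 * X 1 ^ 45) + C (2404467 : ℝ) * (X 0 ^ 24 * X 1 ^ 48) - C (2018289 : ℝ) * (X 0 ^ 21 * X 1 ^ 51) + C (1286271 : ℝ) * (X 0 ^ 18 * X 1 ^ 54) - C (614025 : ℝ) * (X 0 ^ 15 * X 1 ^ 57) + C (213159 : ℝ) * (X 0 ^ 12 * X 1 ^ 60) - C (50904 : ℝ) * (X 0 ^ 9 * X 1 ^ 63) + C (7488 : ℝ) * (X 0 ^ 6 * X 1 ^ 66) - C (512 : ℝ) * (X 0 ^ 3 * X 1 ^ 69) := by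
  unfold fIII gIII
  simp only [map_ofNat, map_one]
  ring

lemma expIII6 : fIII ^ 0 * gIII ^ 6 =
    C (1 : ℝ) * (X 0 ^ 54 * X 1 ^ 18) - C (18 : ℝ) * (X 0 ^ 51 * X 1 ^ 21) + C (153 : ℝ) * (X 0 ^ 48 * X 1 ^ 24) - C (816 : ℝ) * (X 0 ^ 45 * X 1 ^ 27) + C (3060 : ℝ) * (X 0 ^ 42 * X 1 ^ 30) - C (8568 : ℝ) * (X 0 ^ 39 * X 1 ^ 33) + C (18564 : ℝ) * (X 0 ^ 36 * X 1 ^ 36) - C (31824 : ℝ) * (X 0 ^ 33 * X 1 ^ 39) + C (43758 : ℝ) * (X 0 ^ 30 * X 1 ^ 42) - C (48620 : ℝ) * (X 0 ^ 27 * X 1 ^ 45) + C (43758 : ℝ) * (X 0 ^ 24 * X 1 ^ 48) - C (31824 : ℝ) * (X 0 ^ 21 * X 1 ^ 51) + C (18564 : ℝ) * (X 0 ^ 18 * X 1 ^ 54) - C (8568 : ℝ) * (X 0 ^ 15 * X 1 ^ 57) + C (3060 : ℝ) * (X 0 ^ 12 * X 1 ^ 60) - C (816 : ℝ) * (X 0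 ^ 9 * X 1 ^ 63) + C (153 : ℝ) * (X 0 ^ 6 * X 1 ^ 66) - C (18 : ℝ) * (X 0 ^ 3 * X 1 ^ 69) + C (1 : ℝ) * (X 0 ^ 0 * X 1 ^ 72) := by
  unfold fIII gIII
  simp only [map_ofNat, map_one]
  ring

/-- For `n = 72 = 24·3`, the coefficient of the highest power `Y^72` in the
extremal Type III weight enumerator is negative. -/
theorem extremalWE3_72_top_coeff_neg (P : MvPolynomial (Fin 2) ℝ)
    (hP : IsExtremalWE3 72 P) : coeffXY P 0 72 < 0 := by
  obtain ⟨⟨a, hPsum⟩, hlead, hvan⟩ := hP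
  have hP2 : P = C (a 0) * fIII ^ 18 * gIII ^ 0 + C (a 1) * fIII ^ 15 * gIII ^ 1
      + C (a 2) * fIII ^ 12 * gIII ^ 2 + C (a 3) * fIII ^ 9 * gIII ^ 3
      + C (a 4) * fIII ^ 6 * gIII ^ 4 + C (a 5) * fIII ^ 3 * gIII ^ 5
      + C (a 6) * fIII ^ 0 * gIII ^ 6 := by
    rw [hPsum]
    have h7 : (∑ i : Fin 7, C (a i) * fIII ^ (18 - 3 * (i : ℕ)) * gIII ^ (i : ℕ))
        = C (a 0) * fIII ^ 18 * gIII ^ 0 + C (a 1) * fIII ^ 15 * gIII ^ 1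
        + C (a 2) * fIII ^ 12 * gIII ^ 2 + C (a 3) * fIII ^ 9 * gIII ^ 3
        + C (a 4) * fIII ^ 6 * gIII ^ 4 + C (a 5) * fIII ^ 3 * gIII ^ 5
        + C (a 6) * fIII ^ 0 * gIII ^ 6 := by
      rw [Fin.sum_univ_seven]
      norm_num [show ((3 : Fin 7) : ℕ) = 3 from rfl, show ((4 : Fin 7) : ℕ) = 4 from rfl,
        show ((5 : Fin 7) : ℕ) = 5 from rfl, show ((6 : Fin 7) : ℕ) = 6 from rfl]
    exact h7
  have e1 := hvan 1 (by norm_num) (by norm_num)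
  have e2 := hvan 2 (by norm_num) (by norm_num)
  have e3 := hvan 3 (by norm_num) (by norm_num)
  have e4 := hvan 4 (by norm_num) (by norm_num)
  have e5 := hvan 5 (by norm_num) (by norm_num)
  have e6 := hvan 6 (by norm_num) (by norm_num)
  rw [hP2] at hlead e1 e2 e3 e4 e5 e6
  rw [hP2]
  simp only [mul_assoc, expIII0, expIII1, expIII2, expIII3, expIII4, expIII5, expIII6,
    coeffXY_add, coeffXY_sub, coeffXY_Cmul, coeffXY_XX] at hlead e1 e2 e3 e4 e5 e6 ⊢
  norm_num at hlead e1 e2 e3 e4 e5 e6 ⊢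
  linarith
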